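/- arXiv:1308.6620 — 7 statements merged into one kernel-verified Lean document; each statement's English description precedes it below -/
import Mathlib

section
/- Let H : ℝ^m → ℝ be real analytic at 0, with power series expansion H = ∑_k H_k on a neighbourhood of 0, where H_k(x) = p_k(x, …, x) is the homogeneous part of degree k given by the k-th term p_k of the formal multilinear series of H at 0. Let A : ℝ^m → ℝ^m be a linear map, and suppose that the derivative of H in the direction A x vanishes near 0, i.e. dH(x)·(A x) = 0 for all x in some neighbourhood of 0. Then for every k, dH_k(x)·(A x) = 0 for all x ∈ ℝ^m. -/
/-!
Restrict to the line through `x`: put `ψ t = dH(t x)(A x)`. Since `A` is linear,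
`t ψ t = dH(t x)(A (t x)) = 0` near `0`, so `ψ` vanishes near `0` (at `0` itself by continuity).
Differentiating the power series termwise gives `ψ t = ∑ₙ tⁿ dHₙ₊₁(x)(A x)`, and uniqueness of
one-variable power series kills every coefficient.
-/

open Filter Topology

namespace FormalMultilinearSeries

variable {𝕜 : Type*} [NontriviallyNormedField 𝕜]
  {E : Type*} [NormedAddCommGroup E] [NormedSpace 𝕜 E]
  {F : Type*} [NormedAddCommGroup F] [NormedSpace 𝕜 F]
  (p : FormalMultilinearSeries 𝕜 E F)

open Finset in
theorem derivSeries_apply_diag_apply (n : ℕ) (x v : E) :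
    p.derivSeries n (fun _ ↦ x) v
      = ∑ i : Fin (n + 1), p (n + 1) (Function.update (fun _ ↦ x) i v) := by
  classical
  -- `derivSeries` is assembled from `p (1 + n)`
  rw [Nat.add_comm n 1]
  simp only [derivSeries, ContinuousLinearMap.compFormalMultilinearSeries_apply,
    changeOriginSeries, ContinuousLinearMap.compContinuousMultilinearMap_coe,
    ContinuousLinearEquiv.coe_coe, LinearIsometryEquiv.coe_coe, Function.comp_apply,
    map_sum, FunLike.coe_sum, Finset.sum_apply,
    continuousMultilinearCurryFin1_apply, Matrix.zero_empty]
  refine (Fintype.sum_bijective (fun i ↦ (⟨{i}ᶜ, by simp [card_compl]⟩ :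
      {s : Finset (Fin (1 + n)) // #s = n})) ⟨?_, ?_⟩ _ _ fun i ↦ ?_).symm
  · exact fun i j hij ↦ singleton_injective (compl_injective (Subtype.ext_iff.mp hij))
  · rintro ⟨s, hs⟩
    obtain ⟨a, ha⟩ := card_eq_one.mp (by simp [card_compl, hs] : #sᶜ = 1)
    exact ⟨a, Subtype.ext (compl_eq_comm.mp ha)⟩
  · rw [Fin.snoc_zero, changeOriginSeriesTerm_apply]
    congr 1
    ext j
    by_cases hj : j = i <;> simp [piecewise, hj]

theorem hasFDerivAt_apply_diag (n : ℕ) (x : E) :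
    HasFDerivAt (fun y ↦ p (n + 1) (fun _ ↦ y)) (p.derivSeries n (fun _ ↦ x)) x := by
  classical
  convert HasFDerivAt.multilinear_comp (p (n + 1)) (g := fun _ y ↦ y)
    (fun _ ↦ hasFDerivAt_id x) using 1
  ext v
  simp [derivSeries_apply_diag_apply]

end FormalMultilinearSeries

section

variable {𝕜 : Type*} [NontriviallyNormedField 𝕜]
  {E : Type*} [NormedAddCommGroup E] [NormedSpace 𝕜 E]
  {F : Type*} [NormedAddCommGroup F] [NormedSpace 𝕜 F]

theorem eventuallyEq_zero_of_eventually_smul_eq_zero {f : 𝕜 → E} (hf : ContinuousAt f 0)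
    (h : ∀ᶠ t in 𝓝 0, t • f t = 0) : f =ᶠ[𝓝 0] 0 := by
  have hne : f =ᶠ[𝓝[≠] 0] 0 := by
    filter_upwards [eventually_nhdsWithin_of_eventually_nhds h, self_mem_nhdsWithin]
      with t ht ht0 using (smul_eq_zero.mp ht).resolve_left ht0
  refine eventuallyEq_nhds_of_eventuallyEq_nhdsNE hne ?_
  exact tendsto_nhds_unique (hf.tendsto.mono_left nhdsWithin_le_nhds) hne.tendsto

theorem HasFPowerSeriesAt.derivSeries_apply_diag_eq_zero [CompleteSpace F]
    {f : E → F} {p : FormalMultilinearSeries 𝕜 E F} (hf : HasFPowerSeriesAt f p 0) {x v : E}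
    (h : (fun t : 𝕜 ↦ fderiv 𝕜 f (t • x) v) =ᶠ[𝓝 0] 0) (n : ℕ) :
    p.derivSeries n (fun _ ↦ x) v = 0 := by
  obtain ⟨r, hr⟩ := hf
  have hd := hr.fderiv
  rw [← map_zero (ContinuousLinearMap.toSpanSingleton 𝕜 x)] at hd
  have hline := (ContinuousLinearMap.apply 𝕜 F v).comp_hasFPowerSeriesOnBall
    hd.compContinuousLinearMap
  simpa only [ContinuousLinearMap.compFormalMultilinearSeries_apply,
    ContinuousLinearMap.compContinuousMultilinearMap_coe, Function.comp_apply,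
    FormalMultilinearSeries.compContinuousLinearMap_apply, ContinuousLinearMap.apply_apply,
    ContinuousLinearMap.toSpanSingleton_apply, one_smul, FormalMultilinearSeries.zero_apply,
    zero_apply, Function.comp_def]
    using congrArg (fun q ↦ q n (fun _ ↦ 1)) (hline.hasFPowerSeriesAt.eq_zero_of_eventually h)

end

/-- If `H : ℝᵐ → ℝ` is real analytic at `0` with power series `H = ∑ₖ Hₖ`, where
`Hₖ(x) = pₖ(x, …, x)`, `A : ℝᵐ → ℝᵐ` is linear, and `dH(x)·(A x) = 0` for all `x` in a
neighbourhood of `0`, then `dHₖ(x)·(A x) = 0` for every `k` and every `x ∈ ℝᵐ`. -/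
theorem homogeneous_parts_annihilated
    {m : ℕ} (H : (Fin m → ℝ) → ℝ)
    (p : FormalMultilinearSeries ℝ (Fin m → ℝ) ℝ)
    (hp : HasFPowerSeriesAt H p 0)
    (A : (Fin m → ℝ) →ₗ[ℝ] (Fin m → ℝ))
    (hH : ∀ᶠ x in nhds (0 : Fin m → ℝ), fderiv ℝ H x (A x) = 0) :
    ∀ (k : ℕ) (x : Fin m → ℝ),
      fderiv ℝ (fun y => p k (fun _ => y)) x (A x) = 0 := by
  intro k x
  have hsmul : ContinuousAt (fun t : ℝ ↦ t • x) 0 := by fun_prop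
  have hline : (fun t : ℝ ↦ fderiv ℝ H (t • x) (A x)) =ᶠ[𝓝 0] 0 := by
    refine eventuallyEq_zero_of_eventually_smul_eq_zero ?_ ?_
    · refine ContinuousAt.clm_apply ?_ continuousAt_const
      exact hp.analyticAt.fderiv.continuousAt.comp_of_eq hsmul (zero_smul ℝ x)
    · filter_upwards [hsmul.tendsto.eventually (by rwa [zero_smul])] with t ht
      simpa using ht
  cases k with
  | zero =>
    have hconst : (fun y ↦ p 0 (fun _ ↦ y)) = fun _ ↦ p 0 0 :=
      funext fun y ↦ congrArg (p 0) (Subsingleton.elim _ _)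
    simp [hconst]
  | succ n =>
    rw [(p.hasFDerivAt_apply_diag n x).fderiv]
    exact hp.derivSeries_apply_diag_eq_zero hline n
end

section
/- Let J : ℝⁿ × ℝⁿ → ℝ^d be a smooth surjective map, let K : ℝ^d → M_d(ℝ) be a continuous matrix-valued function, and define for differentiable F, G : ℝ^d → ℝ the bracket {F, G}_K(w) = ∇F(w)ᵀ K(w) ∇G(w). Assume J is Poisson: {F ∘ J, G ∘ J}(x) = ({F, G}_K ∘ J)(x) for all smooth F, G : ℝ^d → ℝ and all x ∈ ℝⁿ × ℝⁿ, where {·,·} is the canonical Poisson bracket. Let φ : ℝⁿ × ℝⁿ → ℝⁿ × ℝⁿ be a smooth map that is symplectic in the sense that {F ∘ φ, G ∘ φ} = {F, G} ∘ φ for all smooth F, G : ℝⁿ × ℝⁿ → ℝ, and let φ̃ : ℝ^d → ℝ^d be a smooth map with J ∘ φ = φ̃ ∘ J. Then φ̃ is Poisson for {·,·}_K: {F ∘ φ̃, G ∘ φ̃}_K = {F, G}_K ∘ φ̃ for all smooth F, G : ℝ^d → ℝ. -/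
open Matrix

/-- The canonical Poisson bracket on `T*ℝⁿ = ℝⁿ × ℝⁿ`:
`{F, G}(q,p) = ∑ i, ∂F/∂qᵢ ∂G/∂pᵢ − ∂F/∂pᵢ ∂G/∂qᵢ`. -/
noncomputable def canonicalBracket {n : ℕ} (F G : (Fin n → ℝ) × (Fin n → ℝ) → ℝ)
    (x : (Fin n → ℝ) × (Fin n → ℝ)) : ℝ :=
  ∑ i : Fin n,
    (fderiv ℝ F x (Pi.single i 1, 0) * fderiv ℝ G x (0, Pi.single i 1)
      - fderiv ℝ F x (0, Pi.single i 1) * fderiv ℝ G x (Pi.single i 1, 0))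

/-- The bracket `{F, G}_K(w) = ∇F(w)ᵀ K(w) ∇G(w)` on `ℝᵈ` associated with a matrix-valued
function `K`. -/
noncomputable def KBracket {d : ℕ} (K : (Fin d → ℝ) → Matrix (Fin d) (Fin d) ℝ)
    (F G : (Fin d → ℝ) → ℝ) (w : Fin d → ℝ) : ℝ :=
  ∑ i : Fin d, ∑ j : Fin d,
    fderiv ℝ F w (Pi.single i 1) * K w i j * fderiv ℝ G w (Pi.single j 1)

/-- If `J : ℝⁿ × ℝⁿ → ℝᵈ` is a smooth surjective Poisson map onto `(ℝᵈ, {,}_K)`,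
`φ` is a smooth symplectic map and `φ̃` is a smooth map with `J ∘ φ = φ̃ ∘ J`, then the
reduced map `φ̃` is Poisson for `{,}_K`. -/
theorem reduced_map_is_poisson
    {n d : ℕ} (J : (Fin n → ℝ) × (Fin n → ℝ) → (Fin d → ℝ))
    (hJ : ContDiff ℝ (⊤ : ℕ∞) J) (hJsurj : Function.Surjective J)
    (K : (Fin d → ℝ) → Matrix (Fin d) (Fin d) ℝ)
    (hK : Continuous fun w => K w)
    (hPoisson : ∀ F G : (Fin d → ℝ) → ℝ, ContDiff ℝ (⊤ : ℕ∞) F → ContDiff ℝ (⊤ : ℕ∞) G →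
      ∀ x, canonicalBracket (F ∘ J) (G ∘ J) x = KBracket K F G (J x))
    (φ : (Fin n → ℝ) × (Fin n → ℝ) → (Fin n → ℝ) × (Fin n → ℝ))
    (hφ : ContDiff ℝ (⊤ : ℕ∞) φ)
    (hφsymp : ∀ F G : (Fin n → ℝ) × (Fin n → ℝ) → ℝ, ContDiff ℝ (⊤ : ℕ∞) F → ContDiff ℝ (⊤ : ℕ∞) G →
      ∀ x, canonicalBracket (F ∘ φ) (G ∘ φ) x = canonicalBracket F G (φ x))
    (φt : (Fin d → ℝ) → (Fin d → ℝ)) (hφt : ContDiff ℝ (⊤ : ℕ∞) φt)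
    (hdescend : J ∘ φ = φt ∘ J) :
    ∀ F G : (Fin d → ℝ) → ℝ, ContDiff ℝ (⊤ : ℕ∞) F → ContDiff ℝ (⊤ : ℕ∞) G →
      ∀ w, KBracket K (F ∘ φt) (G ∘ φt) w = KBracket K F G (φt w) := by
  intro F G hF hG w
  obtain ⟨x, rfl⟩ := hJsurj w
  have h1 : KBracket K (F ∘ φt) (G ∘ φt) (J x)
      = canonicalBracket ((F ∘ φt) ∘ J) ((G ∘ φt) ∘ J) x :=
    (hPoisson (F ∘ φt) (G ∘ φt) (hF.comp hφt) (hG.comp hφt) x).symm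
  have hc : ∀ H : (Fin d → ℝ) → ℝ, (H ∘ φt) ∘ J = (H ∘ J) ∘ φ := by
    intro H
    calc (H ∘ φt) ∘ J = H ∘ (φt ∘ J) := rfl
      _ = H ∘ (J ∘ φ) := by rw [hdescend]
      _ = (H ∘ J) ∘ φ := rfl
  rw [h1, hc F, hc G,
    hφsymp (F ∘ J) (G ∘ J) (hF.comp hJ) (hG.comp hJ) x,
    hPoisson F G hF hG (φ x)]
  have : J (φ x) = φt (J x) := congrFun hdescend x
  rw [this]
end

section
/- Let n, k ∈ ℕ and let W be a real n × n skew-symmetric matrix (Wᵀ = −W). Then there exist real n × k matrices Q and P with W = Q Pᵀ − P Qᵀ if and only if rank W ≤ 2k. -/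
/-!
Necessity: `Q Pᵀ - P Qᵀ = [Q | -P] [P | Q]ᵀ` factors through `2k` coordinates.

Sufficiency, by induction on `k`: if a skew matrix `W` has `c = W i j ≠ 0`, subtract the rank-two
skew matrix `c⁻¹ (y xᵀ - x yᵀ)` built from the columns `x = W e_j`, `y = W e_i`. The result `W'` is
skew, vanishes on `ker W` and on `e_i`, `e_j`, and `W e_i`, `W e_j` are independent, so
`rank W' ≤ rank W - 2`.
-/

open Matrix

open LinearMap Module in
theorem LinearMap.finrank_range_add_finrank_map_ker_of_ker_le {K V V₁ V₂ : Type*} [Field K]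
    [AddCommGroup V] [Module K V] [FiniteDimensional K V] [AddCommGroup V₁] [Module K V₁]
    [AddCommGroup V₂] [Module K V₂] {f : V →ₗ[K] V₁} {g : V →ₗ[K] V₂} (hker : ker f ≤ ker g) :
    finrank K (range g) + finrank K ((ker g).map f) = finrank K (range f) := by
  have hf := finrank_range_add_finrank_ker f
  have hg := finrank_range_add_finrank_ker g
  have hfg := finrank_range_add_finrank_ker (f.domRestrict (ker g))
  rw [range_domRestrict, ker_domRestrict,
    (Submodule.comapSubtypeEquivOfLe hker).finrank_eq] at hfg
  omega

namespace Matrix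

variable {R K m n : Type*}

theorem rank_mul_transpose_sub_mul_transpose_le [CommRing R] [StrongRankCondition R] [Fintype m]
    {k : Type*} [Fintype k] (Q P : Matrix m k R) :
    (Q * Pᵀ - P * Qᵀ).rank ≤ 2 * Fintype.card k := by
  have hblock : Q * Pᵀ - P * Qᵀ = fromCols Q (-P) * (fromCols P Q)ᵀ := by
    rw [transpose_fromCols, fromCols_mul_fromRows, Matrix.neg_mul, sub_eq_add_neg]
  calc (Q * Pᵀ - P * Qᵀ).rank ≤ (fromCols Q (-P)).rank := hblock ▸ rank_mul_le_left _ _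
    _ ≤ Fintype.card (k ⊕ k) := rank_le_card_width _
    _ = 2 * Fintype.card k := by rw [Fintype.card_sum, two_mul]

theorem of_snoc_mul_transpose_of_snoc [NonUnitalNonAssocSemiring R] {k : ℕ}
    (Q P : Matrix m (Fin k) R) (q p : m → R) :
    (of fun l => Fin.snoc (Q l) (q l)) * (of fun l => Fin.snoc (P l) (p l))ᵀ =
      Q * Pᵀ + vecMulVec q p := by
  ext a b
  simp [mul_apply, Fin.sum_univ_castSucc, vecMulVec_apply]

theorem transpose_vecMulVec_sub_vecMulVec [CommRing R] (p q : n → R) :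
    (vecMulVec q p - vecMulVec p q)ᵀ = -(vecMulVec q p - vecMulVec p q) := by
  rw [transpose_sub, transpose_vecMulVec, transpose_vecMulVec, neg_sub]

theorem diag_eq_zero_of_transpose_eq_neg [Field K] [NeZero (2 : K)] {W : Matrix n n K}
    (hW : Wᵀ = -W) (i : n) : W i i = 0 := by
  have h : W i i = -W i i := congrFun (congrFun hW i) i
  have h2 : (2 : K) * W i i = 0 := by
    rw [two_mul]
    nth_rewrite 1 [h]
    exact neg_add_cancel _
  exact (mul_eq_zero.mp h2).resolve_left two_ne_zero

variable [Field K] [Fintype n]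

theorem rank_add_two_le_of_ker_le {A B : Matrix m n K}
    (hker : ∀ v, A *ᵥ v = 0 → B *ᵥ v = 0) {u v : n → K} (hu : B *ᵥ u = 0) (hv : B *ᵥ v = 0)
    (hind : LinearIndependent K ![A *ᵥ u, A *ᵥ v]) : B.rank + 2 ≤ A.rank := by
  have hspan : Submodule.span K (Set.range ![A *ᵥ u, A *ᵥ v]) ≤
      (LinearMap.ker B.mulVecLin).map A.mulVecLin := by
    rw [Submodule.span_le, Set.range_subset_iff, Fin.forall_fin_two]
    exact ⟨⟨u, hu, rfl⟩, ⟨v, hv, rfl⟩⟩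
  have h2 := Submodule.finrank_mono hspan
  rw [finrank_span_eq_card hind, Fintype.card_fin] at h2
  have hrank := LinearMap.finrank_range_add_finrank_map_ker_of_ker_le
    (f := A.mulVecLin) (g := B.mulVecLin) hker
  rw [rank, rank]
  omega

variable [DecidableEq n]

theorem exists_rank_sub_vecMulVec_sub_vecMulVec_add_two_le [NeZero (2 : K)] {W : Matrix n n K}
    (hW : Wᵀ = -W) (hW0 : W ≠ 0) :
    ∃ p q : n → K, (W - (vecMulVec q p - vecMulVec p q)).rank + 2 ≤ W.rank := by
  obtain ⟨i, j, hc⟩ : ∃ i j, W i j ≠ 0 := by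
    by_contra! h
    exact hW0 (Matrix.ext h)
  have hji : W j i = -W i j := congrFun (congrFun hW i) j
  have hdiag := diag_eq_zero_of_transpose_eq_neg hW
  set p := Wᵀ j
  set q := (W i j)⁻¹ • Wᵀ i
  refine ⟨p, q, ?_⟩
  have hW' (v : n → K) : (W - (vecMulVec q p - vecMulVec p q)) *ᵥ v =
      W *ᵥ v - ((p ⬝ᵥ v) • q - (q ⬝ᵥ v) • p) := by
    simp [sub_mulVec, vecMulVec_mulVec]
  have hWi : W *ᵥ Pi.single i 1 = Wᵀ i := mulVec_single_one W i
  have hWj : W *ᵥ Pi.single j 1 = p := mulVec_single_one W j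
  refine rank_add_two_le_of_ker_le (fun v hv => ?_) (u := Pi.single i 1) (v := Pi.single j 1)
    ?_ ?_ ?_
  · have hcol (a : n) : Wᵀ a ⬝ᵥ v = 0 := by
      change (Wᵀ *ᵥ v) a = 0
      rw [hW, neg_mulVec, hv, neg_zero, Pi.zero_apply]
    rw [hW', hv, smul_dotProduct, hcol i, hcol j]
    simp
  · rw [hW', hWi]
    simp [p, q, dotProduct_single, hdiag, hc]
  · rw [hW', hWj]
    simp [p, q, dotProduct_single, hdiag, hji, hc]
  · rw [hWi, hWj, LinearIndependent.pair_iff]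
    intro s t hst
    have hi := congrFun hst i
    have hj := congrFun hst j
    simp [p, hdiag, hji, hc] at hi hj
    exact ⟨hj, hi⟩

theorem exists_eq_mul_transpose_sub_mul_transpose_of_rank_le [NeZero (2 : K)] {k : ℕ}
    {W : Matrix n n K} (hW : Wᵀ = -W) (hrank : W.rank ≤ 2 * k) :
    ∃ Q P : Matrix n (Fin k) K, W = Q * Pᵀ - P * Qᵀ := by
  induction k generalizing W with
  | zero =>
    refine ⟨0, 0, ?_⟩
    by_contra hW0
    obtain ⟨_, _, h⟩ := exists_rank_sub_vecMulVec_sub_vecMulVec_add_two_le hW (by simpa using hW0)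
    omega
  | succ k ih =>
    rcases eq_or_ne W 0 with rfl | hW0
    · exact ⟨0, 0, by simp⟩
    obtain ⟨p, q, h⟩ := exists_rank_sub_vecMulVec_sub_vecMulVec_add_two_le hW hW0
    have hW' :
        (W - (vecMulVec q p - vecMulVec p q))ᵀ = -(W - (vecMulVec q p - vecMulVec p q)) := by
      rw [transpose_sub, hW, transpose_vecMulVec_sub_vecMulVec, neg_sub_neg, neg_sub]
    obtain ⟨Q, P, hQP⟩ := ih hW' (by omega)
    refine ⟨of fun l => Fin.snoc (Q l) (q l), of fun l => Fin.snoc (P l) (p l), ?_⟩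
    rw [of_snoc_mul_transpose_of_snoc, of_snoc_mul_transpose_of_snoc,
      ← sub_add_cancel W (vecMulVec q p - vecMulVec p q), hQP]
    abel

end Matrix

/-- A real skew-symmetric `n × n` matrix `W` can be written as `W = Q Pᵀ − P Qᵀ` for some
real `n × k` matrices `Q`, `P` if and only if `rank W ≤ 2k`. -/
theorem skew_eq_QPt_sub_PQt_iff_rank_le
    (n k : ℕ) (W : Matrix (Fin n) (Fin n) ℝ) (hW : Wᵀ = -W) :
    (∃ Q P : Matrix (Fin n) (Fin k) ℝ, W = Q * Pᵀ - P * Qᵀ) ↔ W.rank ≤ 2 * k := by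
  refine ⟨?_, exists_eq_mul_transpose_sub_mul_transpose_of_rank_le hW⟩
  rintro ⟨Q, P, rfl⟩
  simpa using rank_mul_transpose_sub_mul_transpose_le Q P
end

section
/- Let n, k ∈ ℕ with 2k ≥ n − 1. Then the map (Q, P) ↦ Q Pᵀ − P Qᵀ from pairs of real n × k matrices onto the real n × n skew-symmetric matrices is surjective: every real n × n matrix W with Wᵀ = −W can be written as W = Q Pᵀ − P Qᵀ for some real n × k matrices Q, P. -/
/-!
Skew Gaussian elimination. If `W` is alternating and `c = W p q ≠ 0`, subtracting the rank-two
alternating matrix `u vᵀ - v uᵀ`, with `u` the column `p` of `W` and `v` its column `q` divided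
by `c`, kills columns `p` and `q` and creates no new nonzero column. Each such step costs one column of `Q` and of `P` and removes
two nonzero columns of `W`, so `k` steps suffice once `W` has at most `2k + 1` nonzero columns;
a single remaining nonzero column is impossible for an alternating matrix.
-/

open Matrix

namespace Matrix

variable {m K : Type*}

def wedge [Mul K] [Sub K] (u v : m → K) : Matrix m m K := vecMulVec u v - vecMulVec v u

theorem wedge_apply [Mul K] [Sub K] (u v : m → K) (a b : m) :
    wedge u v a b = u a * v b - v a * u b :=
  rfl

section CommRing

variable [CommRing K]

theorem wedge_apply_self (u v : m → K) (a : m) : wedge u v a a = 0 := by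
  rw [wedge_apply, mul_comm, sub_self]

theorem transpose_wedge (u v : m → K) : (wedge u v)ᵀ = -wedge u v := by
  ext a b
  simp only [transpose_apply, wedge_apply, neg_apply]
  ring

theorem snoc_mul_transpose_sub [Fintype m] {k : ℕ} (Q P : Matrix m (Fin k) K) (u v : m → K) :
    (of fun a => Fin.snoc (Q a) (u a)) * (of fun a => Fin.snoc (P a) (v a))ᵀ -
        (of fun a => Fin.snoc (P a) (v a)) * (of fun a => Fin.snoc (Q a) (u a))ᵀ =
      Q * Pᵀ - P * Qᵀ + wedge u v := by
  ext a b
  simp only [sub_apply, add_apply, mul_apply, transpose_apply, of_apply, Fin.sum_univ_castSucc,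
    Fin.snoc_castSucc, Fin.snoc_last, wedge_apply]
  ring

end CommRing

theorem eq_zero_of_transpose_eq_neg_of_card_le_one [AddGroup K] {W : Matrix m m K}
    (hW : Wᵀ = -W) (hdiag : ∀ i, W i i = 0) (s : Finset m) (hs : s.card ≤ 1)
    (hsupp : ∀ i ∉ s, ∀ a, W a i = 0) : W = 0 := by
  ext a b
  by_cases hb : b ∈ s
  · by_cases ha : a ∈ s
    · rw [Finset.card_le_one.mp hs a ha b hb, hdiag, zero_apply]
    · rw [← neg_neg (W a b), ← neg_apply, ← hW, transpose_apply, hsupp a ha, neg_zero, zero_apply]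
  · exact hsupp b hb a

section Field

variable [Field K] [DecidableEq m] {W : Matrix m m K}

theorem exists_sub_wedge_of_ne_zero (hW : Wᵀ = -W) (hdiag : ∀ i, W i i = 0) {s : Finset m}
    (hsupp : ∀ i ∉ s, ∀ a, W a i = 0) (hW0 : W ≠ 0) :
    ∃ u v : m → K, ∃ t : Finset m, t.card + 2 ≤ s.card ∧ ∀ i ∉ t, ∀ a, (W - wedge u v) a i = 0 := by
  have hskew (a b : m) : W b a = -W a b := by simpa using congr($hW a b)
  obtain ⟨p, q, hpq⟩ : ∃ p q, W p q ≠ 0 := by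
    by_contra! h
    exact hW0 (ext h)
  have hq : q ∈ s := by_contra fun hq => hpq (hsupp q hq p)
  have hp : p ∈ s := by_contra fun hp => hpq (by rw [← neg_eq_zero, ← hskew, hsupp p hp q])
  have hqp : q ≠ p := by
    rintro rfl
    exact hpq (hdiag q)
  refine ⟨fun a => W a p, fun a => (W p q)⁻¹ * W a q, (s.erase p).erase q, ?_, ?_⟩
  · rw [Finset.card_erase_of_mem (Finset.mem_erase.2 ⟨hqp, hq⟩), Finset.card_erase_of_mem hp]
    have := Finset.one_lt_card.2 ⟨p, hp, q, hq, hqp.symm⟩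
    omega
  · intro i hi a
    simp only [sub_apply, wedge_apply]
    rcases eq_or_ne i q with rfl | hiq
    · rw [hdiag, hskew p i]
      field_simp
      ring
    rcases eq_or_ne i p with rfl | hip
    · rw [hdiag]
      field_simp
      ring
    have his : i ∉ s := by simpa [hiq, hip] using hi
    have hrow (j : m) : W i j = 0 := by rw [hskew, hsupp i his, neg_zero]
    rw [hsupp i his, hrow, hrow]
    ring

theorem exists_eq_mul_transpose_sub_of_card_support_le [Fintype m] (k : ℕ) (hW : Wᵀ = -W)
    (hdiag : ∀ i, W i i = 0) {s : Finset m} (hs : s.card ≤ 2 * k + 1)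
    (hsupp : ∀ i ∉ s, ∀ a, W a i = 0) : ∃ Q P : Matrix m (Fin k) K, W = Q * Pᵀ - P * Qᵀ := by
  induction k generalizing W s with
  | zero =>
    exact ⟨0, 0, by simp [eq_zero_of_transpose_eq_neg_of_card_le_one hW hdiag s hs hsupp]⟩
  | succ k ih =>
    by_cases hW0 : W = 0
    · exact ⟨0, 0, by simp [hW0]⟩
    obtain ⟨u, v, t, ht, htsupp⟩ := exists_sub_wedge_of_ne_zero hW hdiag hsupp hW0
    obtain ⟨Q, P, hQP⟩ := ih (W := W - wedge u v)
      (by rw [transpose_sub, hW, transpose_wedge]; abel)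
      (fun i => by rw [sub_apply, hdiag, wedge_apply_self, sub_zero]) (by omega) htsupp
    exact ⟨of fun a => Fin.snoc (Q a) (u a), of fun a => Fin.snoc (P a) (v a),
      by rw [snoc_mul_transpose_sub, ← hQP, sub_add_cancel]⟩

end Field

end Matrix

/-- If `2k ≥ n − 1`, every real skew-symmetric `n × n` matrix `W` can be written as
`W = Q Pᵀ − P Qᵀ` for some real `n × k` matrices `Q`, `P`; i.e. the momentum map
`(Q, P) ↦ Q Pᵀ − P Qᵀ` onto the skew-symmetric matrices is surjective. -/
theorem skew_eq_QPt_sub_PQt_of_two_k_ge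
    (n k : ℕ) (hk : 2 * k ≥ n - 1) (W : Matrix (Fin n) (Fin n) ℝ) (hW : Wᵀ = -W) :
    ∃ Q P : Matrix (Fin n) (Fin k) ℝ, W = Q * Pᵀ - P * Qᵀ :=
  exists_eq_mul_transpose_sub_of_card_support_le k hW
    (fun i => self_eq_neg.1 (by simpa using congr($hW i i))) (s := Finset.univ)
    (by rw [Finset.card_univ, Fintype.card_fin]; omega) (by simp)
end

section
/- Let q, p ∈ ℝ³ be linearly independent. Then for q', p' ∈ ℝ³ one has q' × p' = q × p if and only if there exist a, b, c, d ∈ ℝ with a d − b c = 1 such that q' = a q + b p and p' = c q + d p. That is, the fibre of the momentum map J(q, p) = q × p through a point (q, p) with q × p ≠ 0 equals {(a q + b p, c q + d p) : a d − b c = 1}. -/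
open Matrix

/-! Replacing `(q, p)` by `(a q + b p, c q + d p)` multiplies `q × p` by `a d - b c`. Conversely,
`q'` and `p'` are orthogonal to `q' × p' = q × p`, and the orthogonal complement of `q × p ≠ 0` is
the plane spanned by `q` and `p` (it contains that plane and both are 2-dimensional). Hence
`(q', p') = (a q + b p, c q + d p)` for some `a, b, c, d`, and then `a d - b c = 1` since
`q × p ≠ 0`. -/

theorem cross_smul_add_smul {R : Type*} [CommRing R] (q p : Fin 3 → R) (a b c d : R) :
    (a • q + b • p) ⨯₃ (c • q + d • p) = (a * d - b * c) • (q ⨯₃ p) := by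
  simp only [map_add, map_smul, LinearMap.add_apply, LinearMap.smul_apply, cross_self,
    ← cross_anticomm q p]
  module

theorem span_pair_eq_ker_dotProduct_cross {F : Type*} [Field F] {q p : Fin 3 → F}
    (h : LinearIndependent F ![q, p]) :
    Submodule.span F {q, p} = LinearMap.ker (dotProductEquiv F (Fin 3) (q ⨯₃ p)) := by
  have hn : q ⨯₃ p ≠ 0 := crossProduct_ne_zero_iff_linearIndependent.mpr h
  refine Submodule.eq_of_le_of_finrank_eq ?_ ?_
  · rw [Submodule.span_le, Set.insert_subset_iff, Set.singleton_subset_iff]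
    simp only [SetLike.mem_coe, LinearMap.mem_ker, dotProductEquiv_apply_apply, dotProduct_comm _ q,
      dotProduct_comm _ p]
    exact ⟨dot_self_cross q p, dot_cross_self q p⟩
  · have hker := (dotProductEquiv F (Fin 3) (q ⨯₃ p)).finrank_ker_add_one_of_ne_zero
      ((LinearEquiv.map_ne_zero_iff _).mpr hn)
    have hspan := finrank_span_eq_card h
    rw [range_cons_cons_empty] at hspan
    simp only [Module.finrank_fin_fun, Fintype.card_fin] at hker hspan
    omega

theorem exists_smul_add_smul_of_cross_eq {F : Type*} [Field F] {q p q' p' : Fin 3 → F}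
    (h : LinearIndependent F ![q, p]) (heq : q' ⨯₃ p' = q ⨯₃ p) :
    ∃ a b c d : F, q' = a • q + b • p ∧ p' = c • q + d • p := by
  have mem_span {v : Fin 3 → F} (hv : v ⬝ᵥ q' ⨯₃ p' = 0) : ∃ a b : F, v = a • q + b • p := by
    have : v ∈ Submodule.span F {q, p} := by
      rwa [span_pair_eq_ker_dotProduct_cross h, LinearMap.mem_ker, dotProductEquiv_apply_apply,
        dotProduct_comm, ← heq]
    obtain ⟨a, b, hv'⟩ := Submodule.mem_span_pair.mp this
    exact ⟨a, b, hv'.symm⟩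
  obtain ⟨a, b, hq'⟩ := mem_span (dot_self_cross q' p')
  obtain ⟨c, d, hp'⟩ := mem_span (dot_cross_self q' p')
  exact ⟨a, b, c, d, hq', hp'⟩

/-- For linearly independent `q, p ∈ ℝ³`, the fibre of the momentum map
`J(q, p) = q × p` through `(q, p)` is `{(a q + b p, c q + d p) : a d − b c = 1}`. -/
theorem cross_eq_iff_sl2_orbit
    (q p : Fin 3 → ℝ) (h : LinearIndependent ℝ ![q, p]) (q' p' : Fin 3 → ℝ) :
    q' ⨯₃ p' = q ⨯₃ p ↔
      ∃ a b c d : ℝ, a * d - b * c = 1 ∧ q' = a • q + b • p ∧ p' = c • q + d • p := by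
  constructor
  · intro heq
    obtain ⟨a, b, c, d, rfl, rfl⟩ := exists_smul_add_smul_of_cross_eq h heq
    have hn : q ⨯₃ p ≠ 0 := crossProduct_ne_zero_iff_linearIndependent.mpr h
    have hdet : (a * d - b * c) • (q ⨯₃ p) = (1 : ℝ) • (q ⨯₃ p) := by
      rw [← cross_smul_add_smul, heq, one_smul]
    exact ⟨a, b, c, d, smul_left_injective ℝ hn hdet, rfl, rfl⟩
  · rintro ⟨a, b, c, d, hdet, rfl, rfl⟩
    rw [cross_smul_add_smul, hdet, one_smul]
end

section
/- For each w ∈ ℝ³, the fibre {(u, v) ∈ ℝ³ × ℝ³ : u × v = w} of the map (u, v) ↦ u × v is path-connected. -/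
/-!
The fibre over `0` is star-shaped about the origin, since `(t u) × (t v) = t² (u × v)`.
For `w ≠ 0`, a point `(u, v)` of the fibre has `u` in the punctured plane `w^⊥ \ {0}`, and the
vector triple product `(u × v) × u = |u|² v - (u ⬝ v) u` gives `v = |u|⁻² (w × u + (u ⬝ v) u)`.
So the fibre is the image of the path-connected set `(w^⊥ \ {0}) × ℝ` under the continuous map
`(u, t) ↦ (u, |u|⁻² (w × u + t u))`.
-/

open Matrix

section StarConvex

variable {𝕜 E F G : Type*} [CommSemiring 𝕜] [PartialOrder 𝕜] [AddCommMonoid E] [AddCommMonoid F]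
  [AddCommMonoid G] [Module 𝕜 E] [Module 𝕜 F] [Module 𝕜 G]

theorem LinearMap.starConvex_zero_setOf_apply₂_eq_zero (B : E →ₗ[𝕜] F →ₗ[𝕜] G) :
    StarConvex 𝕜 0 {x : E × F | B x.1 x.2 = 0} := by
  rintro ⟨u, v⟩ (huv : B u v = 0) a b - - -
  change B (a • 0 + b • u) (a • 0 + b • v) = 0
  simp [huv]

end StarConvex

theorem Module.Dual.one_lt_rank_ker {K V : Type*} [Field K] [AddCommGroup V] [Module K V]
    [FiniteDimensional K V] {f : Module.Dual K V} (hf : f ≠ 0) (hV : 2 < Module.finrank K V) :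
    1 < Module.rank K (LinearMap.ker f) := by
  have := f.finrank_ker_add_one_of_ne_zero hf
  rw [← Module.finrank_eq_rank]
  exact_mod_cast (by omega : 1 < Module.finrank K (LinearMap.ker f))

theorem Submodule.isPathConnected_diff_zero {E : Type*} [AddCommGroup E] [Module ℝ E]
    [TopologicalSpace E] [IsTopologicalAddGroup E] [ContinuousSMul ℝ E] (K : Submodule ℝ E)
    (hK : 1 < Module.rank ℝ K) : IsPathConnected ((K : Set E) \ {0}) := by
  convert (isPathConnected_compl_singleton_of_one_lt_rank hK 0).image continuous_subtype_val
  ext x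
  simp [and_comm]

section CrossProduct

variable {R : Type*}

theorem cross_cross_self_add_dotProduct_smul [CommRing R] (u v : Fin 3 → R) :
    (u ⨯₃ v) ⨯₃ u + (u ⬝ᵥ v) • u = (u ⬝ᵥ u) • v := by
  rw [cross_cross_eq_smul_sub_smul, dotProduct_comm v u, sub_add_cancel]

theorem cross_inv_smul_cross_add_smul [Field R] {u w : Fin 3 → R} (hu : u ⬝ᵥ u ≠ 0)
    (huw : w ⬝ᵥ u = 0) (t : R) :
    u ⨯₃ ((u ⬝ᵥ u)⁻¹ • (w ⨯₃ u + t • u)) = w := by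
  rw [map_smul, map_add, map_smul, cross_self, smul_zero, add_zero, cross_cross_eq_smul_sub_smul',
    huw, zero_smul, sub_zero, inv_smul_smul₀ hu]

end CrossProduct

noncomputable def crossFibreParam (w : Fin 3 → ℝ) (p : (Fin 3 → ℝ) × ℝ) :
    (Fin 3 → ℝ) × (Fin 3 → ℝ) :=
  (p.1, (p.1 ⬝ᵥ p.1)⁻¹ • (w ⨯₃ p.1 + p.2 • p.1))

theorem continuousOn_crossFibreParam (w : Fin 3 → ℝ) :
    ContinuousOn (crossFibreParam w) {p | p.1 ≠ 0} := by
  have : Continuous (crossProduct w) := LinearMap.continuous_of_finiteDimensional _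
  have : ContinuousOn (fun p : (Fin 3 → ℝ) × ℝ => (p.1 ⬝ᵥ p.1)⁻¹) {p | p.1 ≠ 0} :=
    (continuous_fst.dotProduct continuous_fst).continuousOn.inv₀
      fun p hp => dotProduct_self_eq_zero.not.mpr hp
  unfold crossFibreParam
  fun_prop

theorem crossProduct_fibre_eq_image {w : Fin 3 → ℝ} (hw : w ≠ 0) :
    {x : (Fin 3 → ℝ) × (Fin 3 → ℝ) | x.1 ⨯₃ x.2 = w} =
      crossFibreParam w '' (({u | w ⬝ᵥ u = 0} \ {0}) ×ˢ Set.univ) := by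
  ext ⟨u, v⟩
  constructor
  · rintro (huv : u ⨯₃ v = w)
    have hu : u ≠ 0 := by
      rintro rfl
      exact hw (by simpa using huv.symm)
    refine ⟨(u, u ⬝ᵥ v), ⟨⟨?_, hu⟩, trivial⟩, Prod.ext rfl ?_⟩
    · show w ⬝ᵥ u = 0
      rw [← huv, dotProduct_comm, dot_self_cross]
    · show (u ⬝ᵥ u)⁻¹ • (w ⨯₃ u + (u ⬝ᵥ v) • u) = v
      rw [← huv, cross_cross_self_add_dotProduct_smul,
        inv_smul_smul₀ (dotProduct_self_eq_zero.not.mpr hu)]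
  · rintro ⟨⟨u, t⟩, ⟨⟨huw, hu⟩, -⟩, h⟩
    obtain ⟨rfl, rfl⟩ := Prod.mk.inj h
    exact cross_inv_smul_cross_add_smul (dotProduct_self_eq_zero.not.mpr hu) huw t

/-- Each fibre of the cross product map `(u, v) ↦ u × v` on `ℝ³ × ℝ³` is path-connected. -/
theorem crossProduct_fibre_isPathConnected (w : Fin 3 → ℝ) :
    IsPathConnected {x : (Fin 3 → ℝ) × (Fin 3 → ℝ) | x.1 ⨯₃ x.2 = w} := by
  rcases eq_or_ne w 0 with rfl | hw
  · exact crossProduct.starConvex_zero_setOf_apply₂_eq_zero.isPathConnected (by simp)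
  · have hplane := (LinearMap.ker (dotProductEquiv ℝ (Fin 3) w)).isPathConnected_diff_zero
      (Module.Dual.one_lt_rank_ker (by simpa using hw) (by simp))
    rw [crossProduct_fibre_eq_image hw]
    exact (hplane.prod isPathConnected_univ).image'
      ((continuousOn_crossFibreParam w).mono fun p hp => hp.1.2)
end

section
/- Let f : ℝ^m → ℝ^m be a map and let A be a real symmetric m × m matrix such that the quadratic function I(z) = zᵀ A z is a first integral of the vector field f, i.e. zᵀ A f(z) = 0 for all z ∈ ℝ^m. If z₀, z₁ ∈ ℝ^m and h ∈ ℝ satisfy the implicit midpoint rule z₁ = z₀ + h · f((z₀ + z₁)/2), then z₁ᵀ A z₁ = z₀ᵀ A z₀; that is, the midpoint rule exactly preserves all quadratic first integrals. -/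
open Matrix

/-- The implicit midpoint rule exactly preserves quadratic first integrals: if
`I(z) = zᵀ A z` (with `A` symmetric) is a first integral of `ż = f(z)`, and
`z₁ = z₀ + h f((z₀ + z₁)/2)`, then `z₁ᵀ A z₁ = z₀ᵀ A z₀`. -/
theorem midpoint_rule_preserves_quadratic_first_integrals
    {m : ℕ} (f : (Fin m → ℝ) → (Fin m → ℝ)) (A : Matrix (Fin m) (Fin m) ℝ)
    (hA : Aᵀ = A)
    (hfirst : ∀ z : Fin m → ℝ, z ⬝ᵥ A.mulVec (f z) = 0)
    (z₀ z₁ : Fin m → ℝ) (h : ℝ)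
    (hstep : z₁ = z₀ + h • f ((2 : ℝ)⁻¹ • (z₀ + z₁))) :
    z₁ ⬝ᵥ A.mulVec z₁ = z₀ ⬝ᵥ A.mulVec z₀ := by
  set v := f ((2 : ℝ)⁻¹ • (z₀ + z₁)) with hv
  have key : ((2 : ℝ)⁻¹ • (z₀ + z₁)) ⬝ᵥ A.mulVec v = 0 := hfirst _
  have key2 : (z₀ + z₁) ⬝ᵥ A.mulVec v = 0 := by
    rw [smul_dotProduct] at key
    have := mul_eq_zero.mp key
    rcases this with h1 | h1
    · norm_num at h1
    · exact h1
  have hsym : v ⬝ᵥ A.mulVec z₀ = z₀ ⬝ᵥ A.mulVec v := by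
    rw [dotProduct_mulVec, ← mulVec_transpose, hA, dotProduct_comm]
  rw [hstep] at key2 ⊢
  simp only [add_dotProduct, dotProduct_add, mulVec_add, mulVec_smul,
    dotProduct_smul, smul_dotProduct, smul_eq_mul] at key2 ⊢
  linear_combination h * key2 + h * hsym
end
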